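/- arXiv:1507.04167 — 2 statements merged into one kernel-verified Lean document; each statement's English description precedes it below -/
import Mathlib

section
/- Suppose ≽ satisfies A1 (weak order), weak separability (A2), A3, and closedness. Then for every x ∈ SE there exists z ∈ Θ such that SE(x) ⊆ SE(z), and for every y ∈ NW there exists z ∈ Θ such that NW(y) ⊆ NW(z). Consequently SE = ⋃_{z ∈ Θ} SE(z) and NW = ⋃_{z ∈ Θ} NW(z). -/
open Set
open scoped Classical

section ChoquetAxioms

variable {X₁ X₂ : Type*}

/-- Asymmetric (strict) part of a relation. -/
def SP (R : X₁ × X₂ → X₁ × X₂ → Prop) (x y : X₁ × X₂) : Prop := R x y ∧ ¬ R y x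

/-- Symmetric (indifference) part of a relation. -/
def IP (R : X₁ × X₂ → X₁ × X₂ → Prop) (x y : X₁ × X₂) : Prop := R x y ∧ R y x

/-- Triple cancellation on a set `A`. -/
def TCancel (R : X₁ × X₂ → X₁ × X₂ → Prop) (A : Set (X₁ × X₂)) : Prop :=
  ∀ a b c d : X₁, ∀ p q r s : X₂,
    (a,p) ∈ A → (b,q) ∈ A → (a,r) ∈ A → (b,s) ∈ A →
    (c,p) ∈ A → (d,q) ∈ A → (c,r) ∈ A → (d,s) ∈ A →
    R (b,q) (a,p) → R (a,r) (b,s) → R (c,p) (d,q) → R (c,r) (d,s)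

/-- A1: weak order (complete and transitive). -/
def A1 (R : X₁ × X₂ → X₁ × X₂ → Prop) : Prop :=
  (∀ x y, R x y ∨ R y x) ∧ (∀ x y z, R x y → R y z → R x z)

/-- A2: weak separability. -/
def A2 (R : X₁ × X₂ → X₁ × X₂ → Prop) : Prop :=
  (∀ a b : X₁, ∀ p : X₂, SP R (a,p) (b,p) → ∀ q : X₂, R (a,q) (b,q)) ∧
  (∀ p q : X₂, ∀ a : X₁, SP R (a,p) (a,q) → ∀ b : X₁, R (b,p) (b,q))

/-- Induced order on the first coordinate. -/
def Ge1 (R : X₁ × X₂ → X₁ × X₂ → Prop) (a b : X₁) : Prop := ∀ p : X₂, R (a,p) (b,p)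

/-- Induced order on the second coordinate. -/
def Ge2 (R : X₁ × X₂ → X₁ × X₂ → Prop) (p q : X₂) : Prop := ∀ a : X₁, R (a,p) (a,q)

def Max1 (R : X₁ × X₂ → X₁ × X₂ → Prop) (a : X₁) : Prop := ∀ b : X₁, Ge1 R a b
def Min1 (R : X₁ × X₂ → X₁ × X₂ → Prop) (a : X₁) : Prop := ∀ b : X₁, Ge1 R b a
def Max2 (R : X₁ × X₂ → X₁ × X₂ → Prop) (p : X₂) : Prop := ∀ q : X₂, Ge2 R p q
def Min2 (R : X₁ × X₂ → X₁ × X₂ → Prop) (p : X₂) : Prop := ∀ q : X₂, Ge2 R q p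

/-- The south-east rectangular cone at `z`. -/
def SEz (R : X₁ × X₂ → X₁ × X₂ → Prop) (z : X₁ × X₂) : Set (X₁ × X₂) :=
  {x | Ge1 R x.1 z.1 ∧ Ge2 R z.2 x.2}

/-- The north-west rectangular cone at `z`. -/
def NWz (R : X₁ × X₂ → X₁ × X₂ → Prop) (z : X₁ × X₂) : Set (X₁ × X₂) :=
  {x | Ge2 R x.2 z.2 ∧ Ge1 R z.1 x.1}

/-- A3: at every point, triple cancellation holds on `SEz z` or on `NWz z`. -/
def A3 (R : X₁ × X₂ → X₁ × X₂ → Prop) : Prop :=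
  ∀ z : X₁ × X₂, TCancel R (SEz R z) ∨ TCancel R (NWz R z)

/-- The region SE. -/
def SEreg (R : X₁ × X₂ → X₁ × X₂ → Prop) : Set (X₁ × X₂) :=
  {x | (∃ z : X₁ × X₂, ¬ Max1 R z.1 ∧ ¬ Min2 R z.2 ∧ TCancel R (SEz R z) ∧ x ∈ SEz R z) ∨
       ((Max1 R x.1 ∨ Min2 R x.2) ∧ ∀ y ∈ SEz R x, y ≠ x → ¬ TCancel R (NWz R y))}

/-- The region NW. -/
def NWreg (R : X₁ × X₂ → X₁ × X₂ → Prop) : Set (X₁ × X₂) :=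
  {x | (∃ z : X₁ × X₂, ¬ Min1 R z.1 ∧ ¬ Max2 R z.2 ∧ TCancel R (NWz R z) ∧ x ∈ NWz R z) ∨
       ((Min1 R x.1 ∨ Max2 R x.2) ∧ ∀ y ∈ NWz R x, y ≠ x → ¬ TCancel R (SEz R y))}

/-- Θ = SE ∩ NW. -/
def Theta (R : X₁ × X₂ → X₁ × X₂ → Prop) : Set (X₁ × X₂) := SEreg R ∩ NWreg R

/-- Extreme points of SE. -/
def SEext (R : X₁ × X₂ → X₁ × X₂ → Prop) : Set (X₁ × X₂) :=
  {x | x ∈ Theta R ∧ (Min2 R x.2 ∨ Max1 R x.1)}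

/-- Extreme points of NW. -/
def NWext (R : X₁ × X₂ → X₁ × X₂ → Prop) : Set (X₁ × X₂) :=
  {x | x ∈ Theta R ∧ (Min1 R x.1 ∨ Max2 R x.2)}

/-- Coordinate 1 is essential on `A`. -/
def Ess1 (R : X₁ × X₂ → X₁ × X₂ → Prop) (A : Set (X₁ × X₂)) : Prop :=
  ∃ a b : X₁, ∃ p : X₂, (a,p) ∈ A ∧ (b,p) ∈ A ∧ SP R (a,p) (b,p)

/-- Coordinate 2 is essential on `A`. -/
def Ess2 (R : X₁ × X₂ → X₁ × X₂ → Prop) (A : Set (X₁ × X₂)) : Prop :=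
  ∃ p q : X₂, ∃ a : X₁, (a,p) ∈ A ∧ (a,q) ∈ A ∧ SP R (a,p) (a,q)

/-- Four points all belonging to a set. -/
def In4 (A : Set (X₁ × X₂)) (w x y z : X₁ × X₂) : Prop :=
  w ∈ A ∧ x ∈ A ∧ y ∈ A ∧ z ∈ A

/-- A4. -/
def A4 (R : X₁ × X₂ → X₁ × X₂ → Prop) : Prop :=
  ∀ a b c d : X₁, ∀ p q r s : X₂,
    ((In4 (NWreg R) (a,p) (b,q) (a,r) (b,s) ∧ In4 (NWreg R) (c,p) (d,q) (c,r) (d,s)) ∨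
     (In4 (SEreg R) (a,p) (b,q) (a,r) (b,s) ∧ In4 (SEreg R) (c,p) (d,q) (c,r) (d,s)) ∨
     (In4 (NWreg R) (a,p) (b,q) (a,r) (b,s) ∧ Ess2 R (NWreg R) ∧
        In4 (SEreg R) (c,p) (d,q) (c,r) (d,s)) ∨
     (In4 (SEreg R) (a,p) (b,q) (a,r) (b,s) ∧ Ess2 R (SEreg R) ∧
        In4 (NWreg R) (c,p) (d,q) (c,r) (d,s)) ∨
     (In4 (NWreg R) (a,p) (b,q) (c,p) (d,q) ∧ Ess1 R (NWreg R) ∧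
        In4 (SEreg R) (a,r) (b,s) (c,r) (d,s)) ∨
     (In4 (SEreg R) (a,p) (b,q) (c,p) (d,q) ∧ Ess1 R (SEreg R) ∧
        In4 (NWreg R) (a,r) (b,s) (c,r) (d,s))) →
    R (b,q) (a,p) → R (a,r) (b,s) → R (c,p) (d,q) → R (c,r) (d,s)

/-- One half of A5 (stated for the given coordinate order). -/
def A5half (R : X₁ × X₂ → X₁ × X₂ → Prop) : Prop :=
  ∀ a b c d e g x₀ x₁ : X₁, ∀ p q y₀ y₁ πa πb πc πd : X₂,
    ((In4 (NWreg R) (a,p) (b,q) (c,p) (d,q) ∧ Ess1 R (NWreg R)) ∨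
     (In4 (SEreg R) (a,p) (b,q) (c,p) (d,q) ∧ Ess1 R (SEreg R))) →
    (In4 (NWreg R) (a,y₀) (b,y₀) (c,y₁) (d,y₁) ∨
     In4 (SEreg R) (a,y₀) (b,y₀) (c,y₁) (d,y₁)) →
    ((In4 (NWreg R) (x₀,πa) (x₀,πb) (x₁,πc) (x₁,πd) ∧ Ess2 R (NWreg R)) ∨
     (In4 (SEreg R) (x₀,πa) (x₀,πb) (x₁,πc) (x₁,πd) ∧ Ess2 R (SEreg R))) →
    (In4 (NWreg R) (e,πa) (g,πb) (e,πc) (g,πd) ∨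
     In4 (SEreg R) (e,πa) (g,πb) (e,πc) (g,πd)) →
    R (b,q) (a,p) → R (c,p) (d,q) →
    IP R (a,y₀) (x₀,πa) → IP R (b,y₀) (x₀,πb) →
    IP R (c,y₁) (x₁,πc) → IP R (d,y₁) (x₁,πd) →
    R (e,πa) (g,πb) → R (e,πc) (g,πd)

/-- The relation with the roles of the two coordinates exchanged. -/
def swapRel (R : X₁ × X₂ → X₁ × X₂ → Prop) : X₂ × X₁ → X₂ × X₁ → Prop :=
  fun x y => R (x.2, x.1) (y.2, y.1)

/-- A5 : the condition together with its symmetric (coordinate-exchanged) version. -/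
def A5 (R : X₁ × X₂ → X₁ × X₂ → Prop) : Prop :=
  A5half R ∧ A5half (swapRel R)

/-- A6 : bi-independence. -/
def A6 (R : X₁ × X₂ → X₁ × X₂ → Prop) : Prop :=
  (∀ a b c d : X₁, ∀ p : X₂,
    (In4 (SEreg R) (a,p) (b,p) (c,p) (d,p) ∨ In4 (NWreg R) (a,p) (b,p) (c,p) (d,p)) →
    SP R (a,p) (b,p) → (∃ q : X₂, SP R (c,q) (d,q)) → SP R (c,p) (d,p)) ∧
  (∀ p q r s : X₂, ∀ a : X₁,
    (In4 (SEreg R) (a,p) (a,q) (a,r) (a,s) ∨ In4 (NWreg R) (a,p) (a,q) (a,r) (a,s)) →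
    SP R (a,p) (a,q) → (∃ b : X₁, SP R (b,r) (b,s)) → SP R (a,r) (a,s))

/-- A7 : both coordinates are essential on X. -/
def A7 (R : X₁ × X₂ → X₁ × X₂ → Prop) : Prop :=
  Ess1 R Set.univ ∧ Ess2 R Set.univ

/-- A8 : restricted solvability. -/
def A8 (R : X₁ × X₂ → X₁ × X₂ → Prop) : Prop :=
  (∀ a : X₁, ∀ p r : X₂, ∀ y : X₁ × X₂,
    R (a,p) y → R y (a,r) → ∃ b : X₂, IP R (a,b) y) ∧
  (∀ p : X₂, ∀ a c : X₁, ∀ y : X₁ × X₂,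
    R (a,p) y → R y (c,p) → ∃ b : X₁, IP R (b,p) y)

/-- `S` is an interval of integers. -/
def IsIntervalZ (S : Set ℤ) : Prop :=
  ∀ i j k : ℤ, i ≤ j → j ≤ k → i ∈ S → k ∈ S → j ∈ S

/-- Standard sequence on X₁. -/
def StdSeq1 (R : X₁ × X₂ → X₁ × X₂ → Prop) (S : Set ℤ) (g : ℤ → X₁) (y₀ y₁ : X₂) : Prop :=
  IsIntervalZ S ∧ ¬ (Ge2 R y₀ y₁ ∧ Ge2 R y₁ y₀) ∧
  ∀ i, i ∈ S → (i+1) ∈ S → IP R (g i, y₀) (g (i+1), y₁)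

def BoundedSeq1 (R : X₁ × X₂ → X₁ × X₂ → Prop) (S : Set ℤ) (g : ℤ → X₁) (y₀ : X₂) : Prop :=
  ∃ u v : X₁ × X₂, ∀ i ∈ S, R u (g i, y₀) ∧ R (g i, y₀) v

/-- Standard sequence on X₂. -/
def StdSeq2 (R : X₁ × X₂ → X₁ × X₂ → Prop) (S : Set ℤ) (h : ℤ → X₂) (x₀ x₁ : X₁) : Prop :=
  IsIntervalZ S ∧ ¬ (Ge1 R x₀ x₁ ∧ Ge1 R x₁ x₀) ∧
  ∀ i, i ∈ S → (i+1) ∈ S → IP R (x₀, h i) (x₁, h (i+1))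

def BoundedSeq2 (R : X₁ × X₂ → X₁ × X₂ → Prop) (S : Set ℤ) (h : ℤ → X₂) (x₀ : X₁) : Prop :=
  ∃ u v : X₁ × X₂, ∀ i ∈ S, R u (x₀, h i) ∧ R (x₀, h i) v

/-- A9 : Archimedean axiom. -/
def A9 (R : X₁ × X₂ → X₁ × X₂ → Prop) : Prop :=
  (∀ z ∈ NWreg R, ∀ (S : Set ℤ) (g : ℤ → X₁) (y₀ y₁ : X₂),
    StdSeq1 R S g y₀ y₁ → BoundedSeq1 R S g y₀ →
    (∀ i ∈ S, (g i, y₀) ∈ NWz R z ∧ (g i, y₁) ∈ NWz R z) → S.Finite) ∧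
  (∀ z ∈ SEreg R, ∀ (S : Set ℤ) (g : ℤ → X₁) (y₀ y₁ : X₂),
    StdSeq1 R S g y₀ y₁ → BoundedSeq1 R S g y₀ →
    (∀ i ∈ S, (g i, y₀) ∈ SEz R z ∧ (g i, y₁) ∈ SEz R z) → S.Finite) ∧
  (∀ z ∈ NWreg R, ∀ (S : Set ℤ) (h : ℤ → X₂) (x₀ x₁ : X₁),
    StdSeq2 R S h x₀ x₁ → BoundedSeq2 R S h x₀ →
    (∀ i ∈ S, (x₀, h i) ∈ NWz R z ∧ (x₁, h i) ∈ NWz R z) → S.Finite) ∧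
  (∀ z ∈ SEreg R, ∀ (S : Set ℤ) (h : ℤ → X₂) (x₀ x₁ : X₁),
    StdSeq2 R S h x₀ x₁ → BoundedSeq2 R S h x₀ →
    (∀ i ∈ S, (x₀, h i) ∈ SEz R z ∧ (x₁, h i) ∈ SEz R z) → S.Finite)

/-- Structural assumption. -/
def Structural (R : X₁ × X₂ → X₁ × X₂ → Prop) : Prop :=
  (∀ a b : X₁, a ≠ b → ¬ ∀ p : X₂, IP R (a,p) (b,p)) ∧
  (∀ p q : X₂, p ≠ q → ¬ ∀ a : X₁, IP R (a,p) (a,q))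

/-- Order density. -/
def OrderDense (R : X₁ × X₂ → X₁ × X₂ → Prop) : Prop :=
  ∀ x y : X₁ × X₂, SP R x y → ∃ z : X₁ × X₂, SP R x z ∧ SP R z y

/-- Closedness of SE and NW. -/
def Closedness (R : X₁ × X₂ → X₁ × X₂ → Prop) : Prop :=
  (∀ a b : X₁, ∀ p : X₂, (a,p) ∉ NWreg R → (b,p) ∉ SEreg R →
    ∃ c : X₁, (c,p) ∈ Theta R) ∧
  (∀ a : X₁, ∀ p q : X₂, (a,p) ∉ NWreg R → (a,q) ∉ SEreg R →
    ∃ r : X₂, (a,r) ∈ Theta R)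

/-- A capacity on the two-element set (coordinate 1 ↦ `0`, coordinate 2 ↦ `1`). -/
structure Capacity where
  ν : Set (Fin 2) → ℝ
  empty' : ν ∅ = 0
  mono' : ∀ A B : Set (Fin 2), A ⊆ B → ν A ≤ ν B
  norm' : ν Set.univ = 1

/-- Two-point Choquet integral. -/
noncomputable def Choq (c : Capacity) (t₁ t₂ : ℝ) : ℝ :=
  if t₂ ≤ t₁ then c.ν {0} * t₁ + (1 - c.ν {0}) * t₂
  else (1 - c.ν {1}) * t₁ + c.ν {1} * t₂

/-- `ν` together with `(f₁, f₂)` represents `R`. -/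
def Represents (c : Capacity) (f₁ : X₁ → ℝ) (f₂ : X₂ → ℝ)
    (R : X₁ × X₂ → X₁ × X₂ → Prop) : Prop :=
  ∀ x y : X₁ × X₂, R x y ↔ Choq c (f₁ y.1) (f₂ y.2) ≤ Choq c (f₁ x.1) (f₂ x.2)

/-- `(V₁, V₂)` additively represents `R` on `A`. -/
def AddRep (R : X₁ × X₂ → X₁ × X₂ → Prop) (V₁ : X₁ → ℝ) (V₂ : X₂ → ℝ)
    (A : Set (X₁ × X₂)) : Prop :=
  ∀ x ∈ A, ∀ y ∈ A, (R x y ↔ V₁ y.1 + V₂ y.2 ≤ V₁ x.1 + V₂ x.2)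

/-- `Φ` represents `R` on `A`. -/
def RepOn (R : X₁ × X₂ → X₁ × X₂ → Prop) (Φ : X₁ × X₂ → ℝ) (A : Set (X₁ × X₂)) : Prop :=
  ∀ x ∈ A, ∀ y ∈ A, (R x y ↔ Φ y ≤ Φ x)

/-- `S` union of non-extreme SE cones. -/
def SEstar (R : X₁ × X₂ → X₁ × X₂ → Prop) : Set (X₁ × X₂) :=
  ⋃ z ∈ Theta R \ SEext R, SEz R z

/-- Union of non-extreme NW cones. -/
def NWstar (R : X₁ × X₂ → X₁ × X₂ → Prop) : Set (X₁ × X₂) :=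
  ⋃ z ∈ Theta R \ NWext R, NWz R z

/-- First coordinates appearing both in `SEstar` and `NWstar`. -/
def D1 (R : X₁ × X₂ → X₁ × X₂ → Prop) : Set X₁ :=
  {a | (∃ p : X₂, (a,p) ∈ SEstar R) ∧ (∃ q : X₂, (a,q) ∈ NWstar R)}

/-- Second coordinates appearing both in `SEstar` and `NWstar`. -/
def D2 (R : X₁ × X₂ → X₁ × X₂ → Prop) : Set X₂ :=
  {p | (∃ a : X₁, (a,p) ∈ SEstar R) ∧ (∃ b : X₁, (b,p) ∈ NWstar R)}

end ChoquetAxioms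

/-! Suppose `x ∈ SE` but no point of `Θ` lies north-west of `x`. Closedness, together with the
fact that the NW cone of a point of `NW` stays inside `NW`, pushes the whole cone `NWz x` into
`SE \ NW`: first the column of `x`, then the row through each point of that column. By A3,
triple cancellation then holds on `SEz t` for every `t ∈ NWz x`; these cones are directed and
exhaust `X`, so triple cancellation holds globally, and that places `x` itself in `NW`. The NW
half is the SE half for the relation with the coordinates exchanged. -/

section CoveringByThetaCones

variable {X₁ X₂ : Type*} {R : X₁ × X₂ → X₁ × X₂ → Prop}

lemma ge1_refl (h1 : A1 R) (a : X₁) : Ge1 R a a :=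
  fun p => (h1.1 (a, p) (a, p)).elim id id

lemma ge2_refl (h1 : A1 R) (p : X₂) : Ge2 R p p :=
  fun a => (h1.1 (a, p) (a, p)).elim id id

lemma ge1_trans (h1 : A1 R) {a b c : X₁} (hab : Ge1 R a b) (hbc : Ge1 R b c) : Ge1 R a c :=
  fun p => h1.2 _ _ _ (hab p) (hbc p)

lemma ge2_trans (h1 : A1 R) {p q r : X₂} (hpq : Ge2 R p q) (hqr : Ge2 R q r) : Ge2 R p r :=
  fun a => h1.2 _ _ _ (hpq a) (hqr a)

lemma ge1_total (h1 : A1 R) (h2 : A2 R) (a b : X₁) : Ge1 R a b ∨ Ge1 R b a := by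
  by_cases hab : Ge1 R a b
  · exact Or.inl hab
  · obtain ⟨p, hp⟩ := not_forall.mp hab
    exact Or.inr (h2.1 b a p ⟨(h1.1 _ _).resolve_left hp, hp⟩)

lemma ge2_total (h1 : A1 R) (h2 : A2 R) (p q : X₂) : Ge2 R p q ∨ Ge2 R q p := by
  by_cases hpq : Ge2 R p q
  · exact Or.inl hpq
  · obtain ⟨a, ha⟩ := not_forall.mp hpq
    exact Or.inr (h2.2 q p a ⟨(h1.1 _ _).resolve_left ha, ha⟩)

lemma exists_ge1_not_min1_of_not_max1 (h1 : A1 R) (h2 : A2 R) {w : X₁} (hw : ¬ Max1 R w)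
    (a : X₁) : ∃ c, Ge1 R c a ∧ ¬ Min1 R c := by
  obtain ⟨b, hwb⟩ := not_forall.mp hw
  rcases ge1_total h1 h2 b a with hba | hab
  · exact ⟨b, hba, fun hb => hwb (hb w)⟩
  · exact ⟨a, ge1_refl h1 a, fun ha => hwb (ge1_trans h1 (ha w) hab)⟩

lemma exists_ge2_not_max2_of_not_min2 (h1 : A1 R) (h2 : A2 R) {w : X₂} (hw : ¬ Min2 R w)
    (p : X₂) : ∃ r, Ge2 R p r ∧ ¬ Max2 R r := by
  obtain ⟨q, hqw⟩ := not_forall.mp hw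
  rcases ge2_total h1 h2 p q with hpq | hqp
  · exact ⟨q, hpq, fun hq => hqw (hq w)⟩
  · exact ⟨p, ge2_refl h1 p, fun hp => hqw (ge2_trans h1 hqp (hp w))⟩

lemma TCancel.mono {A B : Set (X₁ × X₂)} (h : TCancel R B) (hAB : A ⊆ B) : TCancel R A :=
  fun a b c d p q r s m₁ m₂ m₃ m₄ m₅ m₆ m₇ m₈ =>
    h a b c d p q r s (hAB m₁) (hAB m₂) (hAB m₃) (hAB m₄) (hAB m₅) (hAB m₆) (hAB m₇) (hAB m₈)

lemma mem_SEz_iff_mem_NWz {x z : X₁ × X₂} : x ∈ SEz R z ↔ z ∈ NWz R x := and_comm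

lemma mem_SEz_self (h1 : A1 R) (z : X₁ × X₂) : z ∈ SEz R z :=
  ⟨ge1_refl h1 _, ge2_refl h1 _⟩

lemma mem_NWz_self (h1 : A1 R) (z : X₁ × X₂) : z ∈ NWz R z :=
  ⟨ge2_refl h1 _, ge1_refl h1 _⟩

lemma SEz_subset_SEz (h1 : A1 R) {x z : X₁ × X₂} (hx : x ∈ SEz R z) : SEz R x ⊆ SEz R z :=
  fun _ hy => ⟨ge1_trans h1 hy.1 hx.1, ge2_trans h1 hx.2 hy.2⟩

lemma NWz_subset_NWz (h1 : A1 R) {x z : X₁ × X₂} (hx : x ∈ NWz R z) : NWz R x ⊆ NWz R z :=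
  fun _ hy => ⟨ge2_trans h1 hy.1 hx.1, ge1_trans h1 hx.2 hy.2⟩

lemma mem_SEreg_of_not_tcancel_NWz (h1 : A1 R) (h3 : A3 R) {x : X₁ × X₂}
    (hx : ¬ TCancel R (NWz R x)) : x ∈ SEreg R := by
  by_cases hext : Max1 R x.1 ∨ Min2 R x.2
  · refine Or.inr ⟨hext, fun y hy _ hTC => hx (hTC.mono ?_)⟩
    exact NWz_subset_NWz h1 (mem_SEz_iff_mem_NWz.mp hy)
  · obtain ⟨hmax, hmin⟩ := not_or.mp hext
    exact Or.inl ⟨x, hmax, hmin, (h3 x).resolve_right hx, mem_SEz_self h1 x⟩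

lemma SEz_subset_SEreg (h1 : A1 R) (h3 : A3 R) {z : X₁ × X₂} (hz : z ∈ SEreg R) :
    SEz R z ⊆ SEreg R := by
  intro x hx
  rcases hz with ⟨w, hw₁, hw₂, hwTC, hzw⟩ | ⟨hext, hcorner⟩
  · exact Or.inl ⟨w, hw₁, hw₂, hwTC, SEz_subset_SEz h1 hzw hx⟩
  · by_cases hxz : x = z
    · exact hxz ▸ Or.inr ⟨hext, hcorner⟩
    · exact mem_SEreg_of_not_tcancel_NWz h1 h3 (hcorner x hx hxz)

lemma TCancel.swapRel {A : Set (X₁ × X₂)} (h : TCancel R A) :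
    TCancel (swapRel R) (Prod.swap ⁻¹' A) :=
  fun p q r s a b c d m₁ m₂ m₃ m₄ m₅ m₆ m₇ m₈ h₁ h₂ h₃ =>
    h a b c d p q r s m₁ m₂ m₅ m₆ m₃ m₄ m₇ m₈ h₁ h₃ h₂

lemma tcancel_swapRel_iff {A : Set (X₁ × X₂)} :
    TCancel (swapRel R) (Prod.swap ⁻¹' A) ↔ TCancel R A :=
  ⟨fun h => h.swapRel, fun h => h.swapRel⟩

lemma SEz_swapRel (z : X₂ × X₁) : SEz (swapRel R) z = Prod.swap ⁻¹' NWz R z.swap := rfl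

lemma NWz_swapRel (z : X₂ × X₁) : NWz (swapRel R) z = Prod.swap ⁻¹' SEz R z.swap := rfl

lemma mem_SEreg_swapRel {x : X₂ × X₁} : x ∈ SEreg (swapRel R) ↔ x.swap ∈ NWreg R := by
  refine or_congr ?_ (and_congr or_comm ?_)
  · refine Prod.swap_surjective.exists.trans (exists_congr fun z => ?_)
    rw [SEz_swapRel, tcancel_swapRel_iff]
    exact ⟨fun ⟨h₁, h₂, h₃, h₄⟩ => ⟨h₂, h₁, h₃, h₄⟩, fun ⟨h₁, h₂, h₃, h₄⟩ => ⟨h₂, h₁, h₃, h₄⟩⟩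
  · refine Prod.swap_surjective.forall.trans (forall_congr' fun y => ?_)
    rw [NWz_swapRel, tcancel_swapRel_iff, Prod.swap_swap, Ne, Prod.swap_eq_iff_eq_swap]
    rfl

lemma mem_NWreg_swapRel {x : X₂ × X₁} : x ∈ NWreg (swapRel R) ↔ x.swap ∈ SEreg R := by
  have h := (mem_SEreg_swapRel (R := swapRel R) (x := x.swap)).symm
  rw [Prod.swap_swap] at h
  exact h

lemma mem_Theta_swapRel {x : X₂ × X₁} : x ∈ Theta (swapRel R) ↔ x.swap ∈ Theta R :=
  (and_congr mem_SEreg_swapRel mem_NWreg_swapRel).trans and_comm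

lemma A1.swapRel (h1 : A1 R) : A1 (swapRel R) :=
  ⟨fun _ _ => h1.1 _ _, fun _ _ _ => h1.2 _ _ _⟩

lemma A2.swapRel (h2 : A2 R) : A2 (swapRel R) :=
  ⟨fun a b p => h2.2 a b p, fun p q a => h2.1 p q a⟩

lemma A3.swapRel (h3 : A3 R) : A3 (swapRel R) :=
  fun z => (h3 z.swap).symm.imp TCancel.swapRel TCancel.swapRel

lemma Closedness.swapRel (hclosed : Closedness R) : Closedness (swapRel R) := by
  refine ⟨fun a b p ha hb => ?_, fun a p q hp hq => ?_⟩
  · rw [mem_NWreg_swapRel] at ha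
    rw [mem_SEreg_swapRel] at hb
    obtain ⟨r, hr⟩ := hclosed.2 p b a hb ha
    exact ⟨r, mem_Theta_swapRel.mpr hr⟩
  · rw [mem_NWreg_swapRel] at hp
    rw [mem_SEreg_swapRel] at hq
    obtain ⟨c, hc⟩ := hclosed.1 q p a hq hp
    exact ⟨c, mem_Theta_swapRel.mpr hc⟩

lemma mem_NWreg_of_not_tcancel_SEz (h1 : A1 R) (h3 : A3 R) {x : X₁ × X₂}
    (hx : ¬ TCancel R (SEz R x)) : x ∈ NWreg R := by
  rw [← Prod.swap_swap x, ← mem_SEreg_swapRel]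
  refine mem_SEreg_of_not_tcancel_NWz h1.swapRel h3.swapRel ?_
  rwa [NWz_swapRel, tcancel_swapRel_iff, Prod.swap_swap]

lemma NWz_subset_NWreg (h1 : A1 R) (h3 : A3 R) {z : X₁ × X₂} (hz : z ∈ NWreg R) :
    NWz R z ⊆ NWreg R := by
  intro x hx
  rw [← Prod.swap_swap x, ← mem_SEreg_swapRel]
  refine SEz_subset_SEreg h1.swapRel h3.swapRel (z := z.swap) ?_ ?_
  · rwa [mem_SEreg_swapRel, Prod.swap_swap]
  · rwa [SEz_swapRel, Prod.swap_swap]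

lemma directed_NWz (h1 : A1 R) (h2 : A2 R) :
    Directed (fun y t : X₁ × X₂ => t ∈ NWz R y) id := by
  intro y y'
  obtain ⟨a, hya, hy'a⟩ : ∃ a, Ge1 R y.1 a ∧ Ge1 R y'.1 a := by
    rcases ge1_total h1 h2 y.1 y'.1 with h | h
    exacts [⟨y'.1, h, ge1_refl h1 _⟩, ⟨y.1, ge1_refl h1 _, h⟩]
  obtain ⟨p, hpy, hpy'⟩ : ∃ p, Ge2 R p y.2 ∧ Ge2 R p y'.2 := by
    rcases ge2_total h1 h2 y.2 y'.2 with h | h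
    exacts [⟨y.2, ge2_refl h1 _, h⟩, ⟨y'.2, h, ge2_refl h1 _⟩]
  exact ⟨(a, p), ⟨hpy, hya⟩, ⟨hpy', hy'a⟩⟩

lemma tcancel_univ_of_forall_mem_NWz (h1 : A1 R) (h2 : A2 R) {x : X₁ × X₂}
    (hTC : ∀ t ∈ NWz R x, TCancel R (SEz R t)) : TCancel R univ := by
  intro a b c d p q r s _ _ _ _ _ _ _ _
  have : IsTrans (X₁ × X₂) (fun y t => t ∈ NWz R y) :=
    ⟨fun _ _ _ hab hbc => NWz_subset_NWz h1 hab hbc⟩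
  have : Nonempty (X₁ × X₂) := ⟨x⟩
  obtain ⟨t, ht⟩ := (directed_NWz h1 h2).finset_le
    {x, (a, p), (b, q), (a, r), (b, s), (c, p), (d, q), (c, r), (d, s)}
  simp only [Finset.mem_insert, Finset.mem_singleton, forall_eq_or_imp, forall_eq, id,
    ← mem_SEz_iff_mem_NWz] at ht
  obtain ⟨htx, hap, hbq, har, hbs, hcp, hdq, hcr, hds⟩ := ht
  exact hTC t (mem_SEz_iff_mem_NWz.mp htx) a b c d p q r s hap hbq har hbs hcp hdq hcr hds

lemma mem_NWreg_of_tcancel_univ (h1 : A1 R) (h2 : A2 R) (hTC : TCancel R univ)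
    {x : X₁ × X₂} (hSE : NWz R x ⊆ SEreg R) : x ∈ NWreg R := by
  have hTC' (A : Set (X₁ × X₂)) : TCancel R A := hTC.mono (subset_univ A)
  by_contra hx
  have hcorner : Min1 R x.1 ∨ Max2 R x.2 := by
    by_contra h
    obtain ⟨hmin, hmax⟩ := not_or.mp h
    exact hx (Or.inl ⟨x, hmin, hmax, hTC' _, mem_NWz_self h1 x⟩)
  obtain ⟨y, hyx, hyne, -⟩ : ∃ y ∈ NWz R x, y ≠ x ∧ TCancel R (SEz R y) := by
    by_contra! h
    exact hx (Or.inr ⟨hcorner, h⟩)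
  -- `y` is not a corner point of SE, as `x ∈ SEz y`; a non-extreme witness `w` for `y ∈ SE`
  -- yields a non-extreme NW cone containing `x`.
  obtain ⟨w, hw₁, hw₂, -, -⟩ | ⟨-, hy⟩ := hSE hyx
  · obtain ⟨c, hc, hcmin⟩ := exists_ge1_not_min1_of_not_max1 h1 h2 hw₁ x.1
    obtain ⟨r, hr, hrmax⟩ := exists_ge2_not_max2_of_not_min2 h1 h2 hw₂ x.2
    exact hx (Or.inl ⟨(c, r), hcmin, hrmax, hTC' _, hr, hc⟩)
  · exact hy x (mem_SEz_iff_mem_NWz.mpr hyx) hyne.symm (hTC' _)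

lemma forall_row_column_mem_SEreg (h1 : A1 R) (h2 : A2 R) (h3 : A3 R)
    (hclosed : Closedness R) {x t : X₁ × X₂} (hΘ : ∀ z ∈ Theta R, z ∉ NWz R x)
    (ht : t ∈ NWz R x) (htNW : t ∉ NWreg R) :
    (∀ b, (b, t.2) ∈ SEreg R) ∧ ∀ q, (t.1, q) ∈ SEreg R := by
  have hincomparable (u : X₁ × X₂) (hu : u ∈ Theta R) : ¬ (u ∈ NWz R t ∨ t ∈ NWz R u) := by
    rintro (h | h)
    · exact hΘ u hu (NWz_subset_NWz h1 ht h)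
    · exact htNW (NWz_subset_NWreg h1 h3 hu.2 h)
  refine ⟨fun b => ?_, fun q => ?_⟩
  · by_contra hb
    obtain ⟨c, hc⟩ := hclosed.1 t.1 b t.2 htNW hb
    refine hincomparable _ hc ?_
    rcases ge1_total h1 h2 t.1 c with h | h
    exacts [Or.inl ⟨ge2_refl h1 _, h⟩, Or.inr ⟨ge2_refl h1 _, h⟩]
  · by_contra hq
    obtain ⟨r, hr⟩ := hclosed.2 t.1 t.2 q htNW hq
    refine hincomparable _ hr ?_
    rcases ge2_total h1 h2 r t.2 with h | h
    exacts [Or.inl ⟨h, ge1_refl h1 _⟩, Or.inr ⟨h, ge1_refl h1 _⟩]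

lemma NWz_subset_SEreg (h1 : A1 R) (h2 : A2 R) (h3 : A3 R) (hclosed : Closedness R)
    {x : X₁ × X₂} (hx : x ∈ SEreg R) (hΘ : ∀ z ∈ Theta R, z ∉ NWz R x) :
    NWz R x ⊆ SEreg R := by
  intro t ht
  have hnotNW (u : X₁ × X₂) (hu : u ∈ NWz R x) (huSE : u ∈ SEreg R) : u ∉ NWreg R :=
    fun huNW => hΘ u ⟨huSE, huNW⟩ hu
  have hxx := mem_NWz_self h1 x
  have hcol := (forall_row_column_mem_SEreg h1 h2 h3 hclosed hΘ hxx (hnotNW x hxx hx)).2 t.2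
  have hxt : (x.1, t.2) ∈ NWz R x := ⟨ht.1, ge1_refl h1 _⟩
  exact (forall_row_column_mem_SEreg h1 h2 h3 hclosed hΘ hxt (hnotNW _ hxt hcol)).1 t.1

lemma exists_mem_Theta_mem_SEz (h1 : A1 R) (h2 : A2 R) (h3 : A3 R) (hclosed : Closedness R)
    {x : X₁ × X₂} (hx : x ∈ SEreg R) : ∃ z ∈ Theta R, x ∈ SEz R z := by
  by_contra! hΘ
  replace hΘ : ∀ z ∈ Theta R, z ∉ NWz R x :=
    fun z hz hzx => hΘ z hz (mem_SEz_iff_mem_NWz.mpr hzx)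
  have hSE := NWz_subset_SEreg h1 h2 h3 hclosed hx hΘ
  have hTC : TCancel R univ := tcancel_univ_of_forall_mem_NWz h1 h2 fun t ht => by
    by_contra h
    exact hΘ t ⟨hSE ht, mem_NWreg_of_not_tcancel_SEz h1 h3 h⟩ ht
  exact hΘ x ⟨hx, mem_NWreg_of_tcancel_univ h1 h2 hTC hSE⟩ (mem_NWz_self h1 x)

lemma exists_mem_Theta_mem_NWz (h1 : A1 R) (h2 : A2 R) (h3 : A3 R) (hclosed : Closedness R)
    {y : X₁ × X₂} (hy : y ∈ NWreg R) : ∃ z ∈ Theta R, y ∈ NWz R z := by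
  obtain ⟨z, hz, hyz⟩ := exists_mem_Theta_mem_SEz h1.swapRel h2.swapRel h3.swapRel
    hclosed.swapRel (x := y.swap) (by rwa [mem_SEreg_swapRel, Prod.swap_swap])
  exact ⟨z.swap, mem_Theta_swapRel.mp hz, hyz⟩

end CoveringByThetaCones

theorem covering_by_theta_cones_general {X₁ X₂ : Type*}
    (R : X₁ × X₂ → X₁ × X₂ → Prop)
    (h1 : A1 R) (h2 : A2 R) (h3 : A3 R) (hclosed : Closedness R) :
    (∀ x ∈ SEreg R, ∃ z ∈ Theta R, SEz R x ⊆ SEz R z) ∧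
    (∀ y ∈ NWreg R, ∃ z ∈ Theta R, NWz R y ⊆ NWz R z) ∧
    SEreg R = ⋃ z ∈ Theta R, SEz R z ∧
    NWreg R = ⋃ z ∈ Theta R, NWz R z := by
  have hSE x (hx : x ∈ SEreg R) := exists_mem_Theta_mem_SEz h1 h2 h3 hclosed hx
  have hNW y (hy : y ∈ NWreg R) := exists_mem_Theta_mem_NWz h1 h2 h3 hclosed hy
  refine ⟨fun x hx => ?_, fun y hy => ?_, ?_, ?_⟩
  · obtain ⟨z, hz, hxz⟩ := hSE x hx
    exact ⟨z, hz, SEz_subset_SEz h1 hxz⟩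
  · obtain ⟨z, hz, hyz⟩ := hNW y hy
    exact ⟨z, hz, NWz_subset_NWz h1 hyz⟩
  · refine (iUnion₂_subset fun z hz => SEz_subset_SEreg h1 h3 hz.1).antisymm' fun x hx => ?_
    obtain ⟨z, hz, hxz⟩ := hSE x hx
    exact mem_biUnion hz hxz
  · refine (iUnion₂_subset fun z hz => NWz_subset_NWreg h1 h3 hz.2).antisymm' fun y hy => ?_
    obtain ⟨z, hz, hyz⟩ := hNW y hy
    exact mem_biUnion hz hyz

/-- Covering SE and NW by cones based at points of Θ. -/
theorem covering_by_theta_cones {X₁ X₂ : Type*} [Nonempty X₁] [Nonempty X₂]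
    (R : X₁ × X₂ → X₁ × X₂ → Prop)
    (h1 : A1 R) (h2 : A2 R) (h3 : A3 R) (hclosed : Closedness R) :
    (∀ x ∈ SEreg R, ∃ z ∈ Theta R, SEz R x ⊆ SEz R z) ∧
    (∀ y ∈ NWreg R, ∃ z ∈ Theta R, NWz R y ⊆ NWz R z) ∧
    SEreg R = ⋃ z ∈ Theta R, SEz R z ∧
    NWreg R = ⋃ z ∈ Theta R, NWz R z :=
  covering_by_theta_cones_general R h1 h2 h3 hclosed
end

section
/- Suppose ≽ satisfies A1 (weak order), weak separability (A2), A3, bi-independence (A6), the structural assumption, and closedness. Suppose coordinate 1 is essential on NW, coordinate 2 is not essential on NW, coordinate 2 is essential on SE and coordinate 1 is not essential on SE (or the same with the two coordinates exchanged). Then either for every x ∈ SE there exists z ∈ Θ with z ∼ x, or for every y ∈ NW there exists z ∈ Θ with z ∼ y. -/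
/-!
Where a coordinate is inessential on a region, points of the region differing only in that
coordinate are indifferent, so it suffices to find a point of Θ on the line (row or column)
through the given point along that coordinate. Closedness puts a point of Θ on every line that
meets both NW and its complement. If some line avoids NW, each transverse line through a point of
NW meets it and hence meets Θ; otherwise each line through a point of SE meets NW and hence Θ.
-/

open Set
open scoped Classical

section ThetaEquivalents

variable {X₁ X₂ : Type*} {R : X₁ × X₂ → X₁ × X₂ → Prop} {A : Set (X₁ × X₂)}

lemma ip_of_not_ess1 (hcomp : ∀ x y, R x y ∨ R y x) (hA : ¬ Ess1 R A) {a b : X₁} {p : X₂}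
    (ha : (a,p) ∈ A) (hb : (b,p) ∈ A) : IP R (a,p) (b,p) := by
  rcases hcomp (a,p) (b,p) with h | h
  · exact ⟨h, by_contra fun hn => hA ⟨a, b, p, ha, hb, h, hn⟩⟩
  · exact ⟨by_contra fun hn => hA ⟨b, a, p, hb, ha, h, hn⟩, h⟩

lemma ip_of_not_ess2 (hcomp : ∀ x y, R x y ∨ R y x) (hA : ¬ Ess2 R A) {a : X₁} {p q : X₂}
    (hp : (a,p) ∈ A) (hq : (a,q) ∈ A) : IP R (a,p) (a,q) := by
  rcases hcomp (a,p) (a,q) with h | h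
  · exact ⟨h, by_contra fun hn => hA ⟨p, q, a, hp, hq, h, hn⟩⟩
  · exact ⟨by_contra fun hn => hA ⟨q, p, a, hq, hp, h, hn⟩, h⟩

lemma exists_row_mem_theta_of_not_mem_nwreg (hcl : Closedness R) {a b : X₁} {p : X₂}
    (ha : (a,p) ∉ NWreg R) (hb : (b,p) ∈ NWreg R) : ∃ c, (c,p) ∈ Theta R := by
  by_cases hbS : (b,p) ∈ SEreg R
  · exact ⟨b, hbS, hb⟩
  · exact hcl.1 a b p ha hbS

lemma exists_col_mem_theta_of_not_mem_nwreg (hcl : Closedness R) {a : X₁} {p q : X₂}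
    (hp : (a,p) ∉ NWreg R) (hq : (a,q) ∈ NWreg R) : ∃ r, (a,r) ∈ Theta R := by
  by_cases hqS : (a,q) ∈ SEreg R
  · exact ⟨q, hqS, hq⟩
  · exact hcl.2 a p q hp hqS

lemma exists_row_mem_theta_of_mem_sereg (hcl : Closedness R) {a b : X₁} {p : X₂}
    (ha : (a,p) ∈ SEreg R) (hb : (b,p) ∈ NWreg R) : ∃ c, (c,p) ∈ Theta R := by
  by_cases haN : (a,p) ∈ NWreg R
  · exact ⟨a, ha, haN⟩
  · exact exists_row_mem_theta_of_not_mem_nwreg hcl haN hb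

lemma exists_col_mem_theta_of_mem_sereg (hcl : Closedness R) {a : X₁} {p q : X₂}
    (hp : (a,p) ∈ SEreg R) (hq : (a,q) ∈ NWreg R) : ∃ r, (a,r) ∈ Theta R := by
  by_cases hpN : (a,p) ∈ NWreg R
  · exact ⟨p, hp, hpN⟩
  · exact exists_col_mem_theta_of_not_mem_nwreg hcl hpN hq

lemma theta_equivalents_of_not_ess2_nwreg_of_not_ess1_sereg (hcomp : ∀ x y, R x y ∨ R y x)
    (hcl : Closedness R) (hNW : ¬ Ess2 R (NWreg R)) (hSE : ¬ Ess1 R (SEreg R)) :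
    (∀ x ∈ SEreg R, ∃ z ∈ Theta R, IP R z x) ∨ (∀ y ∈ NWreg R, ∃ z ∈ Theta R, IP R z y) := by
  by_cases hrow : ∃ p₀, ∀ b, (b,p₀) ∉ NWreg R
  · right
    obtain ⟨p₀, hp₀⟩ := hrow
    rintro ⟨a, p⟩ hy
    obtain ⟨r, hr⟩ := exists_col_mem_theta_of_not_mem_nwreg hcl (hp₀ a) hy
    exact ⟨(a,r), hr, ip_of_not_ess2 hcomp hNW hr.2 hy⟩
  · left
    push Not at hrow
    rintro ⟨a, p⟩ hx
    obtain ⟨b, hb⟩ := hrow p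
    obtain ⟨c, hc⟩ := exists_row_mem_theta_of_mem_sereg hcl hx hb
    exact ⟨(c,p), hc, ip_of_not_ess1 hcomp hSE hc.1 hx⟩

lemma theta_equivalents_of_not_ess1_nwreg_of_not_ess2_sereg (hcomp : ∀ x y, R x y ∨ R y x)
    (hcl : Closedness R) (hNW : ¬ Ess1 R (NWreg R)) (hSE : ¬ Ess2 R (SEreg R)) :
    (∀ x ∈ SEreg R, ∃ z ∈ Theta R, IP R z x) ∨ (∀ y ∈ NWreg R, ∃ z ∈ Theta R, IP R z y) := by
  by_cases hcol : ∃ a₀, ∀ q, (a₀,q) ∉ NWreg R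
  · right
    obtain ⟨a₀, ha₀⟩ := hcol
    rintro ⟨b, p⟩ hy
    obtain ⟨c, hc⟩ := exists_row_mem_theta_of_not_mem_nwreg hcl (ha₀ p) hy
    exact ⟨(c,p), hc, ip_of_not_ess1 hcomp hNW hc.2 hy⟩
  · left
    push Not at hcol
    rintro ⟨a, p⟩ hx
    obtain ⟨q, hq⟩ := hcol a
    obtain ⟨r, hr⟩ := exists_col_mem_theta_of_mem_sereg hcl hx hq
    exact ⟨(a,r), hr, ip_of_not_ess2 hcomp hSE hr.1 hx⟩

end ThetaEquivalents

theorem theta_equivalents_single_essential_general {X₁ X₂ : Type*}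
    (R : X₁ × X₂ → X₁ × X₂ → Prop)
    (h1 : A1 R) (hclosed : Closedness R)
    (hess :
      (Ess1 R (NWreg R) ∧ ¬ Ess2 R (NWreg R) ∧ Ess2 R (SEreg R) ∧ ¬ Ess1 R (SEreg R)) ∨
      (Ess2 R (NWreg R) ∧ ¬ Ess1 R (NWreg R) ∧ Ess1 R (SEreg R) ∧ ¬ Ess2 R (SEreg R))) :
    (∀ x ∈ SEreg R, ∃ z ∈ Theta R, IP R z x) ∨
    (∀ y ∈ NWreg R, ∃ z ∈ Theta R, IP R z y) := by
  rcases hess with ⟨-, hNW, -, hSE⟩ | ⟨-, hNW, -, hSE⟩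
  · exact theta_equivalents_of_not_ess2_nwreg_of_not_ess1_sereg h1.1 hclosed hNW hSE
  · exact theta_equivalents_of_not_ess1_nwreg_of_not_ess2_sereg h1.1 hclosed hNW hSE

/-- If each region has exactly one (opposite) essential coordinate, then every point of SE,
or every point of NW, is indifferent to a point of Θ. -/
theorem theta_equivalents_single_essential {X₁ X₂ : Type*} [Nonempty X₁] [Nonempty X₂]
    (R : X₁ × X₂ → X₁ × X₂ → Prop)
    (h1 : A1 R) (h2 : A2 R) (h3 : A3 R) (h6 : A6 R)
    (hstr : Structural R) (hclosed : Closedness R)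
    (hess :
      (Ess1 R (NWreg R) ∧ ¬ Ess2 R (NWreg R) ∧ Ess2 R (SEreg R) ∧ ¬ Ess1 R (SEreg R)) ∨
      (Ess2 R (NWreg R) ∧ ¬ Ess1 R (NWreg R) ∧ Ess1 R (SEreg R) ∧ ¬ Ess2 R (SEreg R))) :
    (∀ x ∈ SEreg R, ∃ z ∈ Theta R, IP R z x) ∨
    (∀ y ∈ NWreg R, ∃ z ∈ Theta R, IP R z y) :=
  theta_equivalents_single_essential_general R h1 hclosed hess
end
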